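/- arXiv:2506.10726 — 3 statements merged into one kernel-verified Lean document; each statement's English description precedes it below -/
import Mathlib

section
/- For any graph G, the maximum nullity M(G) is at most the zero forcing number Z(G). -/
/-- The set of real symmetric matrices whose off-diagonal zero/nonzero
pattern matches the edges of the graph `G`. -/
def SG {V : Type*} (G : SimpleGraph V) : Set (Matrix V V ℝ) :=
  {A | A.IsSymm ∧ ∀ i j : V, i ≠ j → (A i j ≠ 0 ↔ G.Adj i j)}

/-- Maximum nullity of a graph. -/
noncomputable def maxNullity {V : Type*} [Fintype V] (G : SimpleGraph V) : ℕ :=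
  sSup {k | ∃ A ∈ SG G, Fintype.card V - A.rank = k}

/-- Vertices that eventually become blue starting from the blue set `B`,
under the standard color change rule: a blue vertex with a unique white
neighbor colors that neighbor blue. -/
inductive ZFClosed {V : Type*} (G : SimpleGraph V) (B : Set V) : V → Prop
  | init {v : V} (h : v ∈ B) : ZFClosed G B v
  | force {u v : V} (hu : ZFClosed G B u) (hadj : G.Adj u v)
      (huniq : ∀ w, G.Adj u w → w ≠ v → ZFClosed G B w) : ZFClosed G B v

/-- `B` is a zero forcing set of `G`. -/
def IsZeroForcingSet {V : Type*} (G : SimpleGraph V) (B : Set V) : Prop :=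
  ∀ v : V, ZFClosed G B v

/-- The zero forcing number of `G`: the minimum size of a zero forcing set. -/
noncomputable def zfNum {V : Type*} [Fintype V] (G : SimpleGraph V) : ℕ :=
  sInf {k | ∃ B : Finset V, IsZeroForcingSet G ↑B ∧ B.card = k}

/-! Let `A` have the zero pattern of `G` and `A x = 0`. Whenever `u` forces `v` and `x` vanishes
at `u` and its other neighbours, row `u` of `A x = 0` reads `A u v * x v = 0`, and `A u v ≠ 0`
gives `x v = 0`. So a null vector vanishing on a zero forcing set `B` is zero: restriction to `B`
is injective on the kernel of `A`, whence nullity `A ≤ |B|`. -/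

open Matrix Module

section ZeroForcing

variable {V R : Type*} [Fintype V] {G : SimpleGraph V}

theorem ZFClosed.apply_eq_zero_of_mulVec_eq_zero [Semiring R] [NoZeroDivisors R] {B : Set V}
    {A : Matrix V V R} (hA : ∀ i j, i ≠ j → (A i j ≠ 0 ↔ G.Adj i j))
    {x : V → R} (hx : A *ᵥ x = 0) (hB : ∀ b ∈ B, x b = 0) {v : V} (hv : ZFClosed G B v) :
    x v = 0 := by
  induction hv with
  | init hvB => exact hB _ hvB
  | @force u v _ hadj _ hxu hxw =>
    have hterm : ∀ j, j ≠ v → A u j * x j = 0 := fun j hjv => by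
      by_cases hju : j = u
      · rw [hju, hxu, mul_zero]
      by_cases hadj' : G.Adj u j
      · rw [hxw j hadj' hjv, mul_zero]
      · rw [not_not.mp (mt (hA u j (Ne.symm hju)).mp hadj'), zero_mul]
    have hrow : A u v * x v = 0 := by
      rw [← Finset.sum_eq_single_of_mem v (Finset.mem_univ v) (fun j _ hj => hterm j hj)]
      exact congrFun hx u
    exact (mul_eq_zero.mp hrow).resolve_left ((hA u v (G.ne_of_adj hadj)).mpr hadj)

theorem IsZeroForcingSet.finrank_ker_mulVecLin_le [Field R] {B : Finset V}
    (hB : IsZeroForcingSet G ↑B) {A : Matrix V V R}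
    (hA : ∀ i j, i ≠ j → (A i j ≠ 0 ↔ G.Adj i j)) :
    finrank R (LinearMap.ker A.mulVecLin) ≤ B.card := by
  let restrict : LinearMap.ker A.mulVecLin →ₗ[R] (B → R) :=
    LinearMap.funLeft R R (Subtype.val : B → V) ∘ₗ (LinearMap.ker A.mulVecLin).subtype
  have hinj : Function.Injective restrict := by
    rw [← LinearMap.ker_eq_bot, Submodule.eq_bot_iff]
    rintro ⟨x, hx⟩ hx0
    have hxB : ∀ b ∈ (B : Set V), x b = 0 := fun b hb => congrFun hx0 ⟨b, hb⟩
    exact Subtype.ext <| funext fun v =>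
      (hB v).apply_eq_zero_of_mulVec_eq_zero hA (LinearMap.mem_ker.mp hx) hxB
  simpa using LinearMap.finrank_le_finrank_of_injective hinj

end ZeroForcing

theorem Matrix.rank_add_finrank_ker_mulVecLin {n K : Type*} [Fintype n] [Field K]
    (A : Matrix n n K) : A.rank + finrank K (LinearMap.ker A.mulVecLin) = Fintype.card n := by
  simpa [Matrix.rank] using LinearMap.finrank_range_add_finrank_ker A.mulVecLin

theorem exists_isZeroForcingSet_card_eq_zfNum {V : Type*} [Fintype V] (G : SimpleGraph V) :
    ∃ B : Finset V, IsZeroForcingSet G ↑B ∧ B.card = zfNum G :=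
  Nat.sInf_mem (s := {k | ∃ B : Finset V, IsZeroForcingSet G ↑B ∧ B.card = k})
    ⟨_, Finset.univ, fun _ => .init (Finset.mem_coe.mpr (Finset.mem_univ _)), rfl⟩

/-- For any graph `G`, the maximum nullity is at most the zero forcing number. -/
theorem maxNullity_le_zfNum {V : Type*} [Fintype V] (G : SimpleGraph V) :
    maxNullity G ≤ zfNum G := by
  obtain ⟨B, hB, hBcard⟩ := exists_isZeroForcingSet_card_eq_zfNum G
  refine csSup_le' ?_
  rintro _ ⟨A, hA, rfl⟩
  have := A.rank_add_finrank_ker_mulVecLin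
  have := hB.finrank_ker_mulVecLin_le hA.2
  omega
end

section
/- Let G be a graph with a cut vertex v where G = G1 ⊕_v G2 (G1 and G2 are the graphs induced by the components of G−v together with v). Then M(G) = max{M(G1) + M(G2), M(G1−v) + M(G2−v)} − 1. -/
open Matrix Module Submodule Finset
set_option linter.unusedSectionVars false
set_option maxHeartbeats 1000000
set_option synthInstance.maxHeartbeats 400000

namespace CutVertex

variable {V : Type*} [Fintype V]

lemma sg_nonempty (G : SimpleGraph V) : ∃ A, A ∈ SG G := by
  classical
  refine ⟨Matrix.of fun i j => if G.Adj i j then (1:ℝ) else 0, ?_, ?_⟩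
  · ext i j
    simp only [Matrix.transpose_apply, Matrix.of_apply]
    have : G.Adj j i ↔ G.Adj i j := G.adj_comm j i
    rw [if_congr this rfl rfl]

  · intro i j hij
    by_cases h : G.Adj i j <;> simp [h]

lemma nullity_eq (A : Matrix V V ℝ) :
    Fintype.card V - A.rank = finrank ℝ (LinearMap.ker A.mulVecLin) := by
  have h := LinearMap.finrank_range_add_finrank_ker A.mulVecLin
  rw [Module.finrank_fintype_fun_eq_card] at h
  have h2 : A.rank = finrank ℝ (LinearMap.range A.mulVecLin) := rfl
  omega

lemma rank_le_card' (A : Matrix V V ℝ) : A.rank ≤ Fintype.card V :=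
  A.rank_le_card_width

lemma bdd (G : SimpleGraph V) :
    BddAbove {k | ∃ A ∈ SG G, Fintype.card V - A.rank = k} :=
  ⟨Fintype.card V, by rintro k ⟨A, -, rfl⟩; omega⟩

lemma exists_max (G : SimpleGraph V) :
    ∃ A ∈ SG G, Fintype.card V - A.rank = maxNullity G := by
  obtain ⟨A, hA⟩ := sg_nonempty G
  have : maxNullity G ∈ {k | ∃ A ∈ SG G, Fintype.card V - A.rank = k} :=
    Nat.sSup_mem ⟨Fintype.card V - A.rank, A, hA, rfl⟩ (bdd G)
  exact this

lemma le_max (G : SimpleGraph V) {A : Matrix V V ℝ} (hA : A ∈ SG G) :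
    Fintype.card V - A.rank ≤ maxNullity G := le_csSup (bdd G) ⟨A, hA, rfl⟩

lemma ker_le_max (G : SimpleGraph V) {A : Matrix V V ℝ} (hA : A ∈ SG G) :
    finrank ℝ (LinearMap.ker A.mulVecLin) ≤ maxNullity G :=
  nullity_eq A ▸ le_max G hA

lemma rank_add_le {m n : Type*} [Fintype m] [Fintype n] (A B : Matrix m n ℝ) :
    (A + B).rank ≤ A.rank + B.rank := by
  have hle : LinearMap.range (A + B).mulVecLin ≤
      LinearMap.range A.mulVecLin ⊔ LinearMap.range B.mulVecLin := by
    rintro _ ⟨x, rfl⟩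
    rw [Matrix.mulVecLin_add, LinearMap.add_apply]
    exact Submodule.add_mem_sup (LinearMap.mem_range_self _ x) (LinearMap.mem_range_self _ x)
  have h1 : (A + B).rank = finrank ℝ (LinearMap.range (A + B).mulVecLin) := rfl
  have h2 : A.rank = finrank ℝ (LinearMap.range A.mulVecLin) := rfl
  have h3 : B.rank = finrank ℝ (LinearMap.range B.mulVecLin) := rfl
  have h4 := Submodule.finrank_sup_add_finrank_inf_eq
    (LinearMap.range A.mulVecLin) (LinearMap.range B.mulVecLin)
  have h5 := Submodule.finrank_mono hle
  omega


variable [DecidableEq V]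

/-- Embed a matrix indexed by a finset's coercion into a full matrix, with zeros elsewhere. -/
def embedM (s : Finset V) (M : Matrix ↥(s : Set V) ↥(s : Set V) ℝ) : Matrix V V ℝ :=
  Matrix.of fun i j =>
    if h : i ∈ s ∧ j ∈ s then M ⟨i, Finset.mem_coe.mpr h.1⟩ ⟨j, Finset.mem_coe.mpr h.2⟩ else 0

def inclM (s : Finset V) : Matrix V ↥(s : Set V) ℝ :=
  Matrix.of fun i a => if i = ↑a then 1 else 0

lemma sum_ite_coe (s : Finset V) (f : ↥(s : Set V) → ℝ) (j : V) :
    ∑ b : ↥(s : Set V), (if j = ↑b then 1 else 0) * f b =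
      if h : j ∈ s then f ⟨j, Finset.mem_coe.mpr h⟩ else 0 := by
  by_cases h : j ∈ s
  · rw [dif_pos h]
    rw [Fintype.sum_eq_single (⟨j, Finset.mem_coe.mpr h⟩ : ↥(s : Set V))]
    · simp
    · intro b hb
      have : j ≠ ↑b := by
        intro hjb
        exact hb (Subtype.ext hjb.symm)
      simp [this]
  · rw [dif_neg h]
    apply Finset.sum_eq_zero
    intro b _
    have : j ≠ ↑b := by
      rintro rfl
      exact h (Finset.mem_coe.mp b.2)
    simp [this]

lemma sum_ite_coe' (s : Finset V) (f : ↥(s : Set V) → ℝ) (j : V) :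
    ∑ b : ↥(s : Set V), f b * (if j = ↑b then 1 else 0) =
      if h : j ∈ s then f ⟨j, Finset.mem_coe.mpr h⟩ else 0 := by
  rw [← sum_ite_coe s f j]
  exact Finset.sum_congr rfl fun b _ => mul_comm _ _

lemma embed_factor (s : Finset V) (M : Matrix ↥(s : Set V) ↥(s : Set V) ℝ) :
    embedM s M = inclM s * M * (inclM s)ᵀ := by
  ext i j
  rw [Matrix.mul_apply]
  have : ∀ b : ↥(s : Set V), (inclM s * M) i b * (inclM s)ᵀ b j
      = (inclM s * M) i b * (if j = ↑b then 1 else 0) := fun b => rfl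
  simp only [this]
  rw [sum_ite_coe' s (fun b => (inclM s * M) i b) j]
  by_cases hj : j ∈ s
  · rw [dif_pos hj, Matrix.mul_apply]
    have : ∀ a : ↥(s : Set V), inclM s i a * M a ⟨j, Finset.mem_coe.mpr hj⟩
        = (if i = ↑a then 1 else 0) * M a ⟨j, Finset.mem_coe.mpr hj⟩ := fun a => rfl
    simp only [this]
    rw [sum_ite_coe s (fun a => M a ⟨j, Finset.mem_coe.mpr hj⟩) i]
    by_cases hi : i ∈ s
    · rw [dif_pos hi]
      show embedM s M i j = _
      rw [embedM, Matrix.of_apply, dif_pos ⟨hi, hj⟩]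
    · rw [dif_neg hi]
      show embedM s M i j = 0
      rw [embedM, Matrix.of_apply, dif_neg (fun h => hi h.1)]
  · rw [dif_neg hj]
    show embedM s M i j = 0
    rw [embedM, Matrix.of_apply, dif_neg (fun h => hj h.2)]

lemma res_embed (s : Finset V) (M : Matrix ↥(s : Set V) ↥(s : Set V) ℝ) :
    M = (inclM s)ᵀ * embedM s M * inclM s := by
  ext a b
  rw [Matrix.mul_apply]
  have h1 : ∀ j : V, ((inclM s)ᵀ * embedM s M) a j * inclM s j b
      = (if j = ↑b then ((inclM s)ᵀ * embedM s M) a j else 0) := by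
    intro j
    show _ * (if j = ↑b then 1 else 0) = _
    by_cases h : j = (↑b : V) <;> simp [h]
  simp only [h1]
  rw [Finset.sum_ite_eq' Finset.univ (↑b : V) (fun j => ((inclM s)ᵀ * embedM s M) a j)]
  rw [if_pos (Finset.mem_univ _), Matrix.mul_apply]
  have h2 : ∀ i : V, (inclM s)ᵀ a i * embedM s M i ↑b
      = (if i = ↑a then embedM s M i ↑b else 0) := by
    intro i
    show (if i = ↑a then 1 else 0) * _ = _
    by_cases h : i = (↑a : V) <;> simp [h]
  simp only [h2]
  rw [Finset.sum_ite_eq' Finset.univ (↑a : V) (fun i => embedM s M i ↑b)]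
  rw [if_pos (Finset.mem_univ _)]
  show _ = embedM s M ↑a ↑b
  rw [embedM, Matrix.of_apply, dif_pos ⟨Finset.mem_coe.mp a.2, Finset.mem_coe.mp b.2⟩]

lemma rank_embedM (s : Finset V) (M : Matrix ↥(s : Set V) ↥(s : Set V) ℝ) :
    (embedM s M).rank = M.rank := by
  apply le_antisymm
  · rw [embed_factor]
    exact (Matrix.rank_mul_le_left _ _).trans (Matrix.rank_mul_le_right _ _)
  · conv_lhs => rw [res_embed s M]
    exact (Matrix.rank_mul_le_left _ _).trans (Matrix.rank_mul_le_right _ _)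


lemma rank_row_le (v : V) (r : V → ℝ) :
    (Matrix.of fun i j => if i = v then r j else 0 : Matrix V V ℝ).rank ≤ 1 := by
  have h : (Matrix.of fun i j => if i = v then r j else 0 : Matrix V V ℝ)
      = Matrix.vecMulVec (fun i => if i = v then 1 else 0) r := by
    ext i j
    by_cases hi : i = v <;> simp [Matrix.vecMulVec_apply, hi]
  rw [h, Matrix.vecMulVec_eq (Fin 1)]
  refine (Matrix.rank_mul_le_left _ _).trans ?_
  exact (Matrix.rank_le_card_width _).trans (by simp)

lemma rank_col_le (v : V) (r : V → ℝ) :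
    (Matrix.of fun i j => if j = v then r i else 0 : Matrix V V ℝ).rank ≤ 1 := by
  have h : (Matrix.of fun i j => if j = v then r i else 0 : Matrix V V ℝ)
      = (Matrix.of fun i j => if i = v then r j else 0 : Matrix V V ℝ)ᵀ := by
    ext i j; rfl
  rw [h, Matrix.rank_transpose]
  exact rank_row_le v r

lemma symm_dot {n : Type*} [Fintype n] {M : Matrix n n ℝ} (hM : M.IsSymm)
    (a c : n → ℝ) : (M *ᵥ a) ⬝ᵥ c = a ⬝ᵥ (M *ᵥ c) := by
  rw [Matrix.dotProduct_mulVec]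
  congr 1
  rw [← Matrix.mulVec_transpose, hM.eq]

lemma symm_dichotomy {n : Type*} [Fintype n] [DecidableEq n] {M : Matrix n n ℝ}
    (hM : M.IsSymm) (b : n → ℝ) :
    (∃ y, M *ᵥ y = b) ∨ ∃ u, M *ᵥ u = 0 ∧ b ⬝ᵥ u ≠ 0 := by
  by_cases hb : b ∈ LinearMap.range M.mulVecLin
  · obtain ⟨y, hy⟩ := hb
    exact Or.inl ⟨y, hy⟩
  · right
    set W := LinearMap.range M.mulVecLin with hW
    have hπ : W.mkQ b ≠ 0 := by
      rw [Submodule.mkQ_apply, ne_eq, Submodule.Quotient.mk_eq_zero]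
      exact hb
    have hg : ∃ g : Module.Dual ℝ ((n → ℝ) ⧸ W), g (W.mkQ b) ≠ 0 := by
      by_contra hcon
      push_neg at hcon
      exact hπ ((Module.forall_dual_apply_eq_zero_iff ℝ _).mp hcon)
    obtain ⟨g, hgb⟩ := hg
    set f : (n → ℝ) →ₗ[ℝ] ℝ := g.comp W.mkQ with hf
    set u : n → ℝ := fun i => f (fun j => if i = j then 1 else 0) with hu
    have hfx : ∀ x : n → ℝ, f x = x ⬝ᵥ u := by
      intro x
      conv_lhs => rw [pi_eq_sum_univ x]
      rw [map_sum]
      rw [dotProduct]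
      refine Finset.sum_congr rfl fun i _ => ?_
      rw [LinearMap.map_smul]
      simp [hu]
    have hfW : ∀ w ∈ W, f w = 0 := by
      intro w hw
      rw [hf]
      simp only [LinearMap.comp_apply, Submodule.mkQ_apply]
      rw [(Submodule.Quotient.mk_eq_zero W).mpr hw, map_zero]
    have hMu : M *ᵥ u = 0 := by
      rw [← dotProduct_self_eq_zero (v := M *ᵥ u)]
      have h1 : (M *ᵥ u) ⬝ᵥ (M *ᵥ u) = u ⬝ᵥ (M *ᵥ (M *ᵥ u)) := symm_dot hM u (M *ᵥ u)
      rw [h1, dotProduct_comm, ← hfx]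
      exact hfW _ (LinearMap.mem_range_self M.mulVecLin (M *ᵥ u))
    refine ⟨u, hMu, ?_⟩
    rw [← hfx b]
    exact hgb


/-- Restriction of a matrix to a finset of indices. -/
def resM (s : Finset V) (A : Matrix V V ℝ) : Matrix ↥(s : Set V) ↥(s : Set V) ℝ :=
  Matrix.of fun a b => A ↑a ↑b

/-- Restriction of a vector to a finset of indices. -/
def resV (s : Finset V) (x : V → ℝ) : ↥(s : Set V) → ℝ := fun a => x ↑a

lemma sum_coe (s : Finset V) (f : V → ℝ) :
    ∑ a : ↥(s : Set V), f ↑a = ∑ j ∈ s, f j := by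
  classical
  exact (Finset.sum_subtype s (fun x => Finset.mem_coe.symm) f).symm

lemma resM_symm (s : Finset V) {A : Matrix V V ℝ} (hA : A.IsSymm) :
    (resM s A).IsSymm := by
  ext a b
  exact congrFun (congrFun hA ↑a) ↑b

lemma resM_mulVec (s : Finset V) (A : Matrix V V ℝ) (x : V → ℝ) (a : ↥(s : Set V)) :
    ((resM s A) *ᵥ (resV s x)) a = ∑ j ∈ s, A ↑a j * x j := by
  show ∑ b : ↥(s : Set V), A ↑a ↑b * x ↑b = _
  exact sum_coe s (fun j => A ↑a j * x j)

lemma induce_adj {s : Set V} (G : SimpleGraph V) (a b : ↥s) :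
    (G.induce s).Adj a b ↔ G.Adj ↑a ↑b := Iff.rfl

lemma resM_mem_SG (s : Finset V) {G : SimpleGraph V} {A : Matrix V V ℝ} (hA : A ∈ SG G) :
    resM s A ∈ SG (G.induce (s : Set V)) := by
  refine ⟨resM_symm s hA.1, fun a b hab => ?_⟩
  have hab' : (↑a : V) ≠ ↑b := fun h => hab (Subtype.ext h)
  exact (hA.2 ↑a ↑b hab').trans (induce_adj G a b).symm

section Decomp

variable {G : SimpleGraph V} {v : V} {V1 V2 : Finset V}

lemma mem_v1 (hinter : V1 ∩ V2 = {v}) : v ∈ V1 := by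
  have : v ∈ V1 ∩ V2 := by rw [hinter]; exact Finset.mem_singleton_self v
  exact (Finset.mem_inter.mp this).1

lemma eq_v_of_both (hinter : V1 ∩ V2 = {v}) {i : V} (h1 : i ∈ V1) (h2 : i ∈ V2) :
    i = v := by
  have : i ∈ V1 ∩ V2 := Finset.mem_inter.mpr ⟨h1, h2⟩
  rw [hinter] at this
  exact Finset.mem_singleton.mp this

lemma entry_zero {A : Matrix V V ℝ} (hA : A ∈ SG G)
    (hedges : ∀ a b : V, G.Adj a b → (a ∈ V1 ∧ b ∈ V1) ∨ (a ∈ V2 ∧ b ∈ V2))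
    {i j : V} (hi1 : i ∈ V1) (hi2 : i ∉ V2) (hj2 : j ∈ V2) (hj1 : j ∉ V1) :
    A i j = 0 := by
  have hij : i ≠ j := fun h => hi2 (h ▸ hj2)
  by_contra h
  rcases hedges i j ((hA.2 i j hij).mp h) with ⟨-, hbj⟩ | ⟨hai, -⟩
  · exact hj1 hbj
  · exact hi2 hai

lemma univ_eq (hinter : V1 ∩ V2 = {v}) (hunion : V1 ∪ V2 = Finset.univ) :
    (Finset.univ : Finset V) = V1 ∪ V2.erase v := by
  ext i
  simp only [Finset.mem_univ, true_iff, Finset.mem_union, Finset.mem_erase]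
  have : i ∈ V1 ∪ V2 := hunion ▸ Finset.mem_univ i
  rcases Finset.mem_union.mp this with h | h
  · exact Or.inl h
  · by_cases hiv : i = v
    · exact Or.inl (hiv ▸ mem_v1 hinter)
    · exact Or.inr ⟨hiv, h⟩

lemma disj_1_2e (hinter : V1 ∩ V2 = {v}) : Disjoint V1 (V2.erase v) := by
  rw [Finset.disjoint_left]
  intro i h1 h2
  rcases Finset.mem_erase.mp h2 with ⟨hne, h2'⟩
  exact hne (eq_v_of_both hinter h1 h2')

/-- The key row identity: for `i ∈ V1`, `i ≠ v`, the `i`-th entry of `A *ᵥ x`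
only involves the `V1`-columns. -/
lemma row_split (hinter : V1 ∩ V2 = {v}) (hunion : V1 ∪ V2 = Finset.univ)
    {A : Matrix V V ℝ} (hA : A ∈ SG G)
    (hedges : ∀ a b : V, G.Adj a b → (a ∈ V1 ∧ b ∈ V1) ∨ (a ∈ V2 ∧ b ∈ V2))
    (x : V → ℝ) {i : V} (hi : i ∈ V1) (hiv : i ≠ v) :
    (A *ᵥ x) i = ∑ j ∈ V1, A i j * x j := by
  have h0 : (A *ᵥ x) i = ∑ j ∈ Finset.univ, A i j * x j := rfl
  rw [h0, univ_eq hinter hunion, Finset.sum_union (disj_1_2e hinter)]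
  have h1 : ∑ j ∈ V2.erase v, A i j * x j = 0 := by
    apply Finset.sum_eq_zero
    intro j hj
    rcases Finset.mem_erase.mp hj with ⟨hjv, hj2⟩
    have hi2 : i ∉ V2 := fun h => hiv (eq_v_of_both hinter hi h)
    have hj1 : j ∉ V1 := fun h => hjv (eq_v_of_both hinter h hj2)
    rw [entry_zero hA hedges hi hi2 hj2 hj1, zero_mul]
  rw [h1, add_zero]

lemma rowv_split (hinter : V1 ∩ V2 = {v}) (hunion : V1 ∪ V2 = Finset.univ)
    (A : Matrix V V ℝ) (x : V → ℝ) :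
    (A *ᵥ x) v = (∑ j ∈ V1.erase v, A v j * x j) + A v v * x v
      + ∑ j ∈ V2.erase v, A v j * x j := by
  have h0 : (A *ᵥ x) v = ∑ j ∈ Finset.univ, A v j * x j := rfl
  rw [h0, univ_eq hinter hunion, Finset.sum_union (disj_1_2e hinter)]
  rw [← Finset.add_sum_erase V1 (fun j => A v j * x j) (mem_v1 hinter)]
  ring

/-- For `x` in the kernel of `A`, the restriction of `x` to `V1 \ v` is "almost" in the
kernel of the restricted matrix. -/
lemma ker_res (hinter : V1 ∩ V2 = {v}) (hunion : V1 ∪ V2 = Finset.univ)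
    {A : Matrix V V ℝ} (hA : A ∈ SG G)
    (hedges : ∀ a b : V, G.Adj a b → (a ∈ V1 ∧ b ∈ V1) ∨ (a ∈ V2 ∧ b ∈ V2))
    {x : V → ℝ} (hx : A *ᵥ x = 0) (a : ↥((V1.erase v : Finset V) : Set V)) :
    ((resM (V1.erase v) A) *ᵥ (resV (V1.erase v) x)) a = -(A ↑a v * x v) := by
  have ha1 : (↑a : V) ∈ V1.erase v := Finset.mem_coe.mp a.2
  have hav : (↑a : V) ≠ v := (Finset.mem_erase.mp ha1).1
  have ha1' : (↑a : V) ∈ V1 := (Finset.mem_erase.mp ha1).2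
  rw [resM_mulVec]
  have h1 : (A *ᵥ x) ↑a = 0 := by rw [hx]; rfl
  rw [row_split hinter hunion hA hedges x ha1' hav] at h1
  have h2 := (Finset.add_sum_erase V1 (fun j => A ↑a j * x j) (mem_v1 hinter)).symm
  rw [h2] at h1
  linarith [h1]

end Decomp


/-- The matrix obtained by replacing the `(v,v)` entry of the restriction of `A` to `s`
by the constant `c`. -/
def tilM (v : V) (c : ℝ) (s : Finset V) (A : Matrix V V ℝ) :
    Matrix ↥(s : Set V) ↥(s : Set V) ℝ :=
  Matrix.of fun a b => if (↑a : V) = v ∧ (↑b : V) = v then c else A ↑a ↑b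

/-- The special kernel vector `(1, -y)` of the modified matrix. -/
def zVec (v : V) (s : Finset V) (y : ↥((s.erase v : Finset V) : Set V) → ℝ) :
    ↥(s : Set V) → ℝ :=
  fun b => if h : (↑b : V) = v then 1
    else -(y ⟨↑b, Finset.mem_coe.mpr (Finset.mem_erase.mpr ⟨h, Finset.mem_coe.mp b.2⟩)⟩)

section Key

variable {G : SimpleGraph V} {v : V} {V1 V2 : Finset V}

lemma tilM_mem {A : Matrix V V ℝ} (hA : A ∈ SG G) (c : ℝ) (s : Finset V) :
    tilM v c s A ∈ SG (G.induce (s : Set V)) := by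
  constructor
  · ext a b
    show tilM v c s A b a = tilM v c s A a b
    by_cases h1 : (↑a : V) = v <;> by_cases h2 : (↑b : V) = v <;>
      simp only [tilM, Matrix.of_apply, h1, h2, and_self, if_true, if_false,
        true_and, and_true, false_and, and_false] <;>
      first
        | rfl
        | exact hA.1.apply v ↑b
        | exact hA.1.apply ↑a v
        | exact hA.1.apply ↑a ↑b
  · intro a b hab
    have h : ¬((↑a : V) = v ∧ (↑b : V) = v) := by
      rintro ⟨h1, h2⟩
      exact hab (Subtype.ext (h1.trans h2.symm))
    show (tilM v c s A a b ≠ 0 ↔ _)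
    rw [tilM, Matrix.of_apply, if_neg h]
    have hab' : (↑a : V) ≠ ↑b := fun h => hab (Subtype.ext h)
    exact (hA.2 ↑a ↑b hab').trans (induce_adj G a b).symm

lemma tilM_ker (hinter : V1 ∩ V2 = {v}) (hunion : V1 ∪ V2 = Finset.univ)
    (hedges : ∀ a b : V, G.Adj a b → (a ∈ V1 ∧ b ∈ V1) ∨ (a ∈ V2 ∧ b ∈ V2))
    {A : Matrix V V ℝ} (hA : A ∈ SG G)
    (y1 : ↥((V1.erase v : Finset V) : Set V) → ℝ)
    (hy1 : (resM (V1.erase v) A) *ᵥ y1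
      = (fun a : ↥((V1.erase v : Finset V) : Set V) => A ↑a v))
    {x : V → ℝ} (hx : A *ᵥ x = 0) :
    tilM v ((fun a : ↥((V1.erase v : Finset V) : Set V) => A ↑a v) ⬝ᵥ y1) V1 A
      *ᵥ resV V1 x = 0 := by
  classical
  set c : ℝ := (fun a : ↥((V1.erase v : Finset V) : Set V) => A ↑a v) ⬝ᵥ y1 with hc
  have hsum : ∑ j ∈ V1.erase v, A v j * x j = -(c * x v) := by
    have e1 : ∑ j ∈ V1.erase v, A v j * x j
        = (fun a : ↥((V1.erase v : Finset V) : Set V) => A ↑a v) ⬝ᵥ resV (V1.erase v) x := by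
      rw [dotProduct, ← sum_coe (V1.erase v) (fun j => A v j * x j)]
      refine Finset.sum_congr rfl fun a _ => ?_
      show A v ↑a * x ↑a = A ↑a v * x ↑a
      rw [hA.1.apply v ↑a]
    have e2 : (fun a : ↥((V1.erase v : Finset V) : Set V) => A ↑a v) ⬝ᵥ resV (V1.erase v) x
        = y1 ⬝ᵥ ((resM (V1.erase v) A) *ᵥ resV (V1.erase v) x) := by
      rw [← hy1, symm_dot (resM_symm (V1.erase v) hA.1) y1 (resV (V1.erase v) x)]
    have e3 : y1 ⬝ᵥ ((resM (V1.erase v) A) *ᵥ resV (V1.erase v) x) = -(x v) * c := by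
      rw [dotProduct, hc, dotProduct, Finset.mul_sum]
      refine Finset.sum_congr rfl fun a _ => ?_
      rw [ker_res hinter hunion hA hedges hx a]
      show y1 a * -(A ↑a v * x v) = -x v * (A ↑a v * y1 a)
      ring
    rw [e1, e2, e3]
    ring
  funext a
  show ∑ b : ↥(V1 : Set V), tilM v c V1 A a b * resV V1 x b = 0
  by_cases ha : (↑a : V) = v
  · have hentry : ∀ b : ↥(V1 : Set V),
        tilM v c V1 A a b * resV V1 x b = (if (↑b : V) = v then c else A v ↑b) * x ↑b := by
      intro b
      by_cases hb : (↑b : V) = v <;>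
        simp only [tilM, Matrix.of_apply, ha, hb, and_self, if_true, if_false, true_and,
          and_true, false_and, and_false, resV]
    rw [Finset.sum_congr rfl (fun b _ => hentry b)]
    rw [sum_coe V1 (fun j => (if j = v then c else A v j) * x j)]
    rw [← Finset.add_sum_erase V1 (fun j => (if j = v then c else A v j) * x j) (mem_v1 hinter)]
    rw [if_pos rfl]
    have : ∑ j ∈ V1.erase v, (if j = v then c else A v j) * x j
        = ∑ j ∈ V1.erase v, A v j * x j := by
      refine Finset.sum_congr rfl fun j hj => ?_
      rw [if_neg (Finset.mem_erase.mp hj).1]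
    rw [this, hsum]
    ring
  · have hentry : ∀ b : ↥(V1 : Set V),
        tilM v c V1 A a b * resV V1 x b = A ↑a ↑b * x ↑b := by
      intro b
      simp only [tilM, Matrix.of_apply, ha, false_and, if_false, resV]
    rw [Finset.sum_congr rfl (fun b _ => hentry b)]
    rw [sum_coe V1 (fun j => A ↑a j * x j)]
    rw [← row_split hinter hunion hA hedges x (Finset.mem_coe.mp a.2) ha, hx]
    rfl

lemma tilM_z (hinter : V1 ∩ V2 = {v}) (hunion : V1 ∪ V2 = Finset.univ)
    (hedges : ∀ a b : V, G.Adj a b → (a ∈ V1 ∧ b ∈ V1) ∨ (a ∈ V2 ∧ b ∈ V2))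
    {A : Matrix V V ℝ} (hA : A ∈ SG G)
    (y1 : ↥((V1.erase v : Finset V) : Set V) → ℝ)
    (hy1 : (resM (V1.erase v) A) *ᵥ y1
      = (fun a : ↥((V1.erase v : Finset V) : Set V) => A ↑a v)) :
    tilM v ((fun a : ↥((V1.erase v : Finset V) : Set V) => A ↑a v) ⬝ᵥ y1) V1 A
      *ᵥ zVec v V1 y1 = 0 := by
  classical
  set c : ℝ := (fun a : ↥((V1.erase v : Finset V) : Set V) => A ↑a v) ⬝ᵥ y1 with hc
  set w : V → ℝ := fun j => if j = v then 1
    else (if h : j ∈ V1.erase v then -(y1 ⟨j, Finset.mem_coe.mpr h⟩) else 0) with hw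
  have hwv : w v = 1 := by rw [hw]; simp
  have hwa : ∀ a' : ↥((V1.erase v : Finset V) : Set V), w ↑a' = -(y1 a') := by
    intro a'
    have hv' : (↑a' : V) ≠ v := (Finset.mem_erase.mp (Finset.mem_coe.mp a'.2)).1
    have hm' : (↑a' : V) ∈ V1.erase v := Finset.mem_coe.mp a'.2
    rw [hw]
    simp only [if_neg hv', dif_pos hm']
  have hzw : ∀ b : ↥(V1 : Set V), zVec v V1 y1 b = w ↑b := by
    intro b
    by_cases hb : (↑b : V) = v
    · rw [hw]
      simp only [zVec, dif_pos hb, if_pos hb]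
    · have hmem : (↑b : V) ∈ V1.erase v :=
        Finset.mem_erase.mpr ⟨hb, Finset.mem_coe.mp b.2⟩
      rw [hw]
      simp only [zVec, dif_neg hb, if_neg hb, dif_pos hmem]
  funext a
  show ∑ b : ↥(V1 : Set V), tilM v c V1 A a b * zVec v V1 y1 b = 0
  by_cases ha : (↑a : V) = v
  · have hentry : ∀ b : ↥(V1 : Set V),
        tilM v c V1 A a b * zVec v V1 y1 b = (if (↑b : V) = v then c else A v ↑b) * w ↑b := by
      intro b
      rw [hzw b]
      by_cases hb : (↑b : V) = v <;>
        simp only [tilM, Matrix.of_apply, ha, hb, and_self, if_true, if_false, true_and,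
          and_true, false_and, and_false]
    rw [Finset.sum_congr rfl (fun b _ => hentry b)]
    rw [sum_coe V1 (fun j => (if j = v then c else A v j) * w j)]
    rw [← Finset.add_sum_erase V1 (fun j => (if j = v then c else A v j) * w j) (mem_v1 hinter)]
    have h2 : ∑ j ∈ V1.erase v, (if j = v then c else A v j) * w j = -c := by
      rw [← sum_coe (V1.erase v) (fun j => (if j = v then c else A v j) * w j)]
      have : ∀ a' : ↥((V1.erase v : Finset V) : Set V),
          (if (↑a' : V) = v then c else A v ↑a') * w ↑a' = -(A ↑a' v * y1 a') := by
        intro a'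
        have hv' : (↑a' : V) ≠ v := (Finset.mem_erase.mp (Finset.mem_coe.mp a'.2)).1
        rw [if_neg hv', hwa a', hA.1.apply v ↑a']
        ring
      rw [Finset.sum_congr rfl (fun a' _ => this a')]
      rw [Finset.sum_neg_distrib, hc, dotProduct]
    rw [if_pos rfl, hwv, h2]
    ring
  · have hentry : ∀ b : ↥(V1 : Set V),
        tilM v c V1 A a b * zVec v V1 y1 b = A ↑a ↑b * w ↑b := by
      intro b
      rw [hzw b]
      simp only [tilM, Matrix.of_apply, ha, false_and, if_false]
    rw [Finset.sum_congr rfl (fun b _ => hentry b)]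
    rw [sum_coe V1 (fun j => A ↑a j * w j)]
    rw [← Finset.add_sum_erase V1 (fun j => A ↑a j * w j) (mem_v1 hinter)]
    have ham : (↑a : V) ∈ V1.erase v := Finset.mem_erase.mpr ⟨ha, Finset.mem_coe.mp a.2⟩
    have h2 : ∑ j ∈ V1.erase v, A ↑a j * w j = -(A ↑a v) := by
      rw [← sum_coe (V1.erase v) (fun j => A ↑a j * w j)]
      have he : ∀ b' : ↥((V1.erase v : Finset V) : Set V),
          A ↑a ↑b' * w ↑b' = -(A ↑a ↑b' * y1 b') := by
        intro b'
        rw [hwa b']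
        ring
      rw [Finset.sum_congr rfl (fun b' _ => he b')]
      rw [Finset.sum_neg_distrib]
      have hT : (resM (V1.erase v) A *ᵥ y1) ⟨↑a, Finset.mem_coe.mpr ham⟩
          = ∑ b' : ↥((V1.erase v : Finset V) : Set V), A ↑a ↑b' * y1 b' := rfl
      rw [← hT, hy1]
    rw [hwv, h2]
    ring

lemma key_not (hinter : V1 ∩ V2 = {v}) (hunion : V1 ∪ V2 = Finset.univ)
    (hedges : ∀ a b : V, G.Adj a b → (a ∈ V1 ∧ b ∈ V1) ∨ (a ∈ V2 ∧ b ∈ V2))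
    {A : Matrix V V ℝ} (hA : A ∈ SG G)
    (u1 : ↥((V1.erase v : Finset V) : Set V) → ℝ)
    (hu1 : (resM (V1.erase v) A) *ᵥ u1 = 0)
    (hb1 : (fun a : ↥((V1.erase v : Finset V) : Set V) => A ↑a v) ⬝ᵥ u1 ≠ 0) :
    finrank ℝ (LinearMap.ker A.mulVecLin) + 1 ≤
      maxNullity (G.induce ↑(V1.erase v)) + maxNullity (G.induce ↑(V2.erase v)) := by
  classical
  have hinter' : V2 ∩ V1 = {v} := by rw [Finset.inter_comm]; exact hinter
  have hunion' : V2 ∪ V1 = Finset.univ := by rw [Finset.union_comm]; exact hunion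
  have hedges' : ∀ a b : V, G.Adj a b → (a ∈ V2 ∧ b ∈ V2) ∨ (a ∈ V1 ∧ b ∈ V1) :=
    fun a b h => (hedges a b h).symm
  have hmemK : ∀ x ∈ LinearMap.ker A.mulVecLin, A *ᵥ x = 0 := by
    intro x hx
    rwa [LinearMap.mem_ker, Matrix.mulVecLin_apply] at hx
  have hxv : ∀ x ∈ LinearMap.ker A.mulVecLin, x v = 0 := by
    intro x hx
    have hx0 := hmemK x hx
    have h1 : ∀ a, ((resM (V1.erase v) A) *ᵥ resV (V1.erase v) x) a = -(A ↑a v * x v) :=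
      fun a => ker_res hinter hunion hA hedges hx0 a
    have h2 : u1 ⬝ᵥ ((resM (V1.erase v) A) *ᵥ resV (V1.erase v) x) = 0 := by
      rw [← symm_dot (resM_symm (V1.erase v) hA.1) u1 (resV (V1.erase v) x), hu1,
        zero_dotProduct]
    have h3 : u1 ⬝ᵥ ((resM (V1.erase v) A) *ᵥ resV (V1.erase v) x)
        = -(x v) * ((fun a : ↥((V1.erase v : Finset V) : Set V) => A ↑a v) ⬝ᵥ u1) := by
      rw [dotProduct, dotProduct, Finset.mul_sum]
      refine Finset.sum_congr rfl fun a _ => ?_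
      rw [h1 a]
      show u1 a * -(A ↑a v * x v) = -x v * (A ↑a v * u1 a)
      ring
    rw [h3] at h2
    rcases mul_eq_zero.mp h2 with h | h
    · linarith
    · exact absurd h hb1
  have hker1 : ∀ x ∈ LinearMap.ker A.mulVecLin,
      (resM (V1.erase v) A) *ᵥ resV (V1.erase v) x = 0 := by
    intro x hx
    funext a
    show ((resM (V1.erase v) A) *ᵥ resV (V1.erase v) x) a = 0
    rw [ker_res hinter hunion hA hedges (hmemK x hx) a, hxv x hx, mul_zero, neg_zero]
  have hker2 : ∀ x ∈ LinearMap.ker A.mulVecLin,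
      (resM (V2.erase v) A) *ᵥ resV (V2.erase v) x = 0 := by
    intro x hx
    funext a
    show ((resM (V2.erase v) A) *ᵥ resV (V2.erase v) x) a = 0
    rw [ker_res hinter' hunion' hA hedges' (hmemK x hx) a, hxv x hx, mul_zero, neg_zero]
  have hmid : ∀ x ∈ LinearMap.ker A.mulVecLin,
      (fun a : ↥((V1.erase v : Finset V) : Set V) => A ↑a v) ⬝ᵥ resV (V1.erase v) x
      + (fun a : ↥((V2.erase v : Finset V) : Set V) => A ↑a v) ⬝ᵥ resV (V2.erase v) x = 0 := by
    intro x hx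
    have h0 : (A *ᵥ x) v = 0 := by rw [hmemK x hx]; rfl
    rw [rowv_split hinter hunion A x] at h0
    have e1 : (fun a : ↥((V1.erase v : Finset V) : Set V) => A ↑a v) ⬝ᵥ resV (V1.erase v) x
        = ∑ j ∈ V1.erase v, A v j * x j := by
      rw [dotProduct, ← sum_coe (V1.erase v) (fun j => A v j * x j)]
      refine Finset.sum_congr rfl fun a _ => ?_
      show A ↑a v * x ↑a = A v ↑a * x ↑a
      rw [hA.1.apply v ↑a]
    have e2 : (fun a : ↥((V2.erase v : Finset V) : Set V) => A ↑a v) ⬝ᵥ resV (V2.erase v) x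
        = ∑ j ∈ V2.erase v, A v j * x j := by
      rw [dotProduct, ← sum_coe (V2.erase v) (fun j => A v j * x j)]
      refine Finset.sum_congr rfl fun a _ => ?_
      show A ↑a v * x ↑a = A v ↑a * x ↑a
      rw [hA.1.apply v ↑a]
    rw [e1, e2]
    have hxv0 := hxv x hx
    rw [hxv0] at h0
    linarith
  set φ : (↥(LinearMap.ker (resM (V1.erase v) A).mulVecLin)
      × ↥(LinearMap.ker (resM (V2.erase v) A).mulVecLin)) →ₗ[ℝ] ℝ :=
    { toFun := fun pq =>
        (fun a : ↥((V1.erase v : Finset V) : Set V) => A ↑a v) ⬝ᵥ (pq.1 : _)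
        + (fun a : ↥((V2.erase v : Finset V) : Set V) => A ↑a v) ⬝ᵥ (pq.2 : _)
      map_add' := by
        intro p q
        simp only [Prod.fst_add, Prod.snd_add, Submodule.coe_add, dotProduct_add]
        ring
      map_smul' := by
        intro c p
        simp only [Prod.smul_fst, Prod.smul_snd, Submodule.coe_smul, dotProduct_smul,
          RingHom.id_apply, smul_eq_mul]
        ring } with hphi
  have hres1 : ∀ x : ↥(LinearMap.ker A.mulVecLin),
      resV (V1.erase v) (x : V → ℝ) ∈ LinearMap.ker (resM (V1.erase v) A).mulVecLin := by
    intro x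
    rw [LinearMap.mem_ker, Matrix.mulVecLin_apply]
    exact hker1 x x.2
  have hres2 : ∀ x : ↥(LinearMap.ker A.mulVecLin),
      resV (V2.erase v) (x : V → ℝ) ∈ LinearMap.ker (resM (V2.erase v) A).mulVecLin := by
    intro x
    rw [LinearMap.mem_ker, Matrix.mulVecLin_apply]
    exact hker2 x x.2
  set κ : ↥(LinearMap.ker A.mulVecLin) →ₗ[ℝ]
      (↥(LinearMap.ker (resM (V1.erase v) A).mulVecLin)
        × ↥(LinearMap.ker (resM (V2.erase v) A).mulVecLin)) :=
    LinearMap.prod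
      (LinearMap.codRestrict _ ((LinearMap.funLeft ℝ ℝ Subtype.val).comp
        (LinearMap.ker A.mulVecLin).subtype) hres1)
      (LinearMap.codRestrict _ ((LinearMap.funLeft ℝ ℝ Subtype.val).comp
        (LinearMap.ker A.mulVecLin).subtype) hres2)
    with hκ
  have hκφ : ∀ x : ↥(LinearMap.ker A.mulVecLin), φ (κ x) = 0 := fun x => hmid x x.2
  set ψ : ↥(LinearMap.ker A.mulVecLin) →ₗ[ℝ] ↥(LinearMap.ker φ) := LinearMap.codRestrict _ κ
    (fun x => LinearMap.mem_ker.mpr (hκφ x)) with hψ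
  have hψinj : Function.Injective ψ := by
    rw [injective_iff_map_eq_zero]
    intro x hx
    have hκx : κ x = 0 := congrArg Subtype.val hx
    have h1 : resV (V1.erase v) (x : V → ℝ) = 0 := congrArg Subtype.val (congrArg Prod.fst hκx)
    have h2 : resV (V2.erase v) (x : V → ℝ) = 0 := congrArg Subtype.val (congrArg Prod.snd hκx)
    have hx0 : (x : V → ℝ) = 0 := by
      funext i
      by_cases hiv : i = v
      · rw [hiv]; exact hxv x x.2
      · have hi : i ∈ V1 ∪ V2 := hunion ▸ Finset.mem_univ i
        rcases Finset.mem_union.mp hi with h | h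
        · have hmem : i ∈ V1.erase v := Finset.mem_erase.mpr ⟨hiv, h⟩
          exact congrFun h1 ⟨i, Finset.mem_coe.mpr hmem⟩
        · have hmem : i ∈ V2.erase v := Finset.mem_erase.mpr ⟨hiv, h⟩
          exact congrFun h2 ⟨i, Finset.mem_coe.mpr hmem⟩
    exact Subtype.ext hx0
  have hdim1 : finrank ℝ ↥(LinearMap.ker A.mulVecLin) ≤ finrank ℝ ↥(LinearMap.ker φ) :=
    LinearMap.finrank_le_finrank_of_injective hψinj
  have hdim2 := LinearMap.finrank_range_add_finrank_ker φ
  rw [Module.finrank_prod] at hdim2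
  have hmemu1 : u1 ∈ LinearMap.ker (resM (V1.erase v) A).mulVecLin := by
    rw [LinearMap.mem_ker, Matrix.mulVecLin_apply]; exact hu1
  have hrange : 1 ≤ finrank ℝ ↥(LinearMap.range φ) := by
    by_contra hcon
    push_neg at hcon
    have hzero : finrank ℝ ↥(LinearMap.range φ) = 0 := by omega
    have hbot : LinearMap.range φ = ⊥ := Submodule.finrank_eq_zero.mp hzero
    have hφ0 : φ (⟨u1, hmemu1⟩, 0) = 0 := by
      have hm := LinearMap.mem_range_self φ (⟨u1, hmemu1⟩, 0)
      rw [hbot, Submodule.mem_bot] at hm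
      exact hm
    rw [hphi] at hφ0
    simp only [LinearMap.coe_mk, AddHom.coe_mk] at hφ0
    rw [Submodule.coe_zero, dotProduct_zero, add_zero] at hφ0
    exact hb1 hφ0
  have hn1 : finrank ℝ ↥(LinearMap.ker (resM (V1.erase v) A).mulVecLin)
      ≤ maxNullity (G.induce ↑(V1.erase v)) :=
    ker_le_max _ (resM_mem_SG (V1.erase v) hA)
  have hn2 : finrank ℝ ↥(LinearMap.ker (resM (V2.erase v) A).mulVecLin)
      ≤ maxNullity (G.induce ↑(V2.erase v)) :=
    ker_le_max _ (resM_mem_SG (V2.erase v) hA)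
  omega


lemma key_both (hinter : V1 ∩ V2 = {v}) (hunion : V1 ∪ V2 = Finset.univ)
    (hedges : ∀ a b : V, G.Adj a b → (a ∈ V1 ∧ b ∈ V1) ∨ (a ∈ V2 ∧ b ∈ V2))
    {A : Matrix V V ℝ} (hA : A ∈ SG G)
    (y1 : ↥((V1.erase v : Finset V) : Set V) → ℝ)
    (hy1 : (resM (V1.erase v) A) *ᵥ y1
      = (fun a : ↥((V1.erase v : Finset V) : Set V) => A ↑a v))
    (y2 : ↥((V2.erase v : Finset V) : Set V) → ℝ)
    (hy2 : (resM (V2.erase v) A) *ᵥ y2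
      = (fun a : ↥((V2.erase v : Finset V) : Set V) => A ↑a v)) :
    finrank ℝ (LinearMap.ker A.mulVecLin) + 1 ≤
      maxNullity (G.induce (V1 : Set V)) + maxNullity (G.induce (V2 : Set V)) := by
  classical
  have hinter' : V2 ∩ V1 = {v} := by rw [Finset.inter_comm]; exact hinter
  have hunion' : V2 ∪ V1 = Finset.univ := by rw [Finset.union_comm]; exact hunion
  have hedges' : ∀ a b : V, G.Adj a b → (a ∈ V2 ∧ b ∈ V2) ∨ (a ∈ V1 ∧ b ∈ V1) :=
    fun a b h => (hedges a b h).symm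
  have hmemK : ∀ x ∈ LinearMap.ker A.mulVecLin, A *ᵥ x = 0 := by
    intro x hx
    rwa [LinearMap.mem_ker, Matrix.mulVecLin_apply] at hx
  set c1 : ℝ := (fun a : ↥((V1.erase v : Finset V) : Set V) => A ↑a v) ⬝ᵥ y1 with hc1
  set c2 : ℝ := (fun a : ↥((V2.erase v : Finset V) : Set V) => A ↑a v) ⬝ᵥ y2 with hc2
  have hres1 : ∀ x : ↥(LinearMap.ker A.mulVecLin),
      resV V1 (x : V → ℝ) ∈ LinearMap.ker (tilM v c1 V1 A).mulVecLin := by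
    intro x
    rw [LinearMap.mem_ker, Matrix.mulVecLin_apply]
    exact tilM_ker hinter hunion hedges hA y1 hy1 (hmemK x x.2)
  have hres2 : ∀ x : ↥(LinearMap.ker A.mulVecLin),
      resV V2 (x : V → ℝ) ∈ LinearMap.ker (tilM v c2 V2 A).mulVecLin := by
    intro x
    rw [LinearMap.mem_ker, Matrix.mulVecLin_apply]
    exact tilM_ker hinter' hunion' hedges' hA y2 hy2 (hmemK x x.2)
  have hzmem : zVec v V2 y2 ∈ LinearMap.ker (tilM v c2 V2 A).mulVecLin := by
    rw [LinearMap.mem_ker, Matrix.mulVecLin_apply]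
    exact tilM_z hinter' hunion' hedges' hA y2 hy2
  set m1 : ↥(LinearMap.ker A.mulVecLin) →ₗ[ℝ] ↥(LinearMap.ker (tilM v c1 V1 A).mulVecLin) :=
    LinearMap.codRestrict _ ((LinearMap.funLeft ℝ ℝ Subtype.val).comp
      (LinearMap.ker A.mulVecLin).subtype) hres1 with hm1
  set m2 : ↥(LinearMap.ker A.mulVecLin) →ₗ[ℝ] ↥(LinearMap.ker (tilM v c2 V2 A).mulVecLin) :=
    LinearMap.codRestrict _ ((LinearMap.funLeft ℝ ℝ Subtype.val).comp
      (LinearMap.ker A.mulVecLin).subtype) hres2 with hm2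
  set ψ : (↥(LinearMap.ker A.mulVecLin) × ℝ) →ₗ[ℝ]
      (↥(LinearMap.ker (tilM v c1 V1 A).mulVecLin)
        × ↥(LinearMap.ker (tilM v c2 V2 A).mulVecLin)) :=
    LinearMap.prod (m1.comp (LinearMap.fst ℝ _ ℝ))
      ((m2.comp (LinearMap.fst ℝ _ ℝ)) +
        ((LinearMap.toSpanSingleton ℝ _ (⟨zVec v V2 y2, hzmem⟩ :
          ↥(LinearMap.ker (tilM v c2 V2 A).mulVecLin))).comp (LinearMap.snd ℝ _ ℝ))) with hψ
  have hψinj : Function.Injective ψ := by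
    rw [injective_iff_map_eq_zero]
    rintro ⟨x, s⟩ hx
    have h1 : m1 x = 0 := congrArg Prod.fst hx
    have h2 : m2 x + s • (⟨zVec v V2 y2, hzmem⟩ :
        ↥(LinearMap.ker (tilM v c2 V2 A).mulVecLin)) = 0 := by
      have := congrArg Prod.snd hx
      simpa [hψ, LinearMap.toSpanSingleton_apply] using this
    have h1' : resV V1 (x : V → ℝ) = 0 := congrArg Subtype.val h1
    have hxv : (x : V → ℝ) v = 0 :=
      congrFun h1' ⟨v, Finset.mem_coe.mpr (mem_v1 hinter)⟩
    have h2' : resV V2 (x : V → ℝ) + s • zVec v V2 y2 = 0 := congrArg Subtype.val h2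
    have hzv : zVec v V2 y2 ⟨v, Finset.mem_coe.mpr (mem_v1 hinter')⟩ = 1 := by
      simp only [zVec, dif_pos]
    have hs : s = 0 := by
      have := congrFun h2' ⟨v, Finset.mem_coe.mpr (mem_v1 hinter')⟩
      simp only [Pi.add_apply, Pi.smul_apply, smul_eq_mul, Pi.zero_apply, hzv, mul_one] at this
      have hxv2 : resV V2 (x : V → ℝ) ⟨v, Finset.mem_coe.mpr (mem_v1 hinter')⟩ = 0 := hxv
      rw [hxv2, zero_add] at this
      exact this
    have h2'' : resV V2 (x : V → ℝ) = 0 := by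
      rw [hs, zero_smul, add_zero] at h2'
      exact h2'
    have hx0 : (x : V → ℝ) = 0 := by
      funext i
      have hi : i ∈ V1 ∪ V2 := hunion ▸ Finset.mem_univ i
      rcases Finset.mem_union.mp hi with h | h
      · exact congrFun h1' ⟨i, Finset.mem_coe.mpr h⟩
      · exact congrFun h2'' ⟨i, Finset.mem_coe.mpr h⟩
    have : (⟨x, s⟩ : ↥(LinearMap.ker A.mulVecLin) × ℝ) = (⟨0, 0⟩ : _ × _) := by
      rw [hs]
      exact Prod.ext (by exact Subtype.ext hx0) rfl
    simpa using this
  have hdim1 : finrank ℝ (↥(LinearMap.ker A.mulVecLin) × ℝ)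
      ≤ finrank ℝ (↥(LinearMap.ker (tilM v c1 V1 A).mulVecLin)
        × ↥(LinearMap.ker (tilM v c2 V2 A).mulVecLin)) :=
    LinearMap.finrank_le_finrank_of_injective hψinj
  rw [Module.finrank_prod, Module.finrank_prod, Module.finrank_self] at hdim1
  have hn1 : finrank ℝ ↥(LinearMap.ker (tilM v c1 V1 A).mulVecLin)
      ≤ maxNullity (G.induce (V1 : Set V)) :=
    ker_le_max _ (tilM_mem hA c1 V1)
  have hn2 : finrank ℝ ↥(LinearMap.ker (tilM v c2 V2 A).mulVecLin)
      ≤ maxNullity (G.induce (V2 : Set V)) :=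
    ker_le_max _ (tilM_mem hA c2 V2)
  omega

end Key


section Lower

variable {G : SimpleGraph V} {v : V} {V1 V2 : Finset V}

lemma card_setcoe (s : Finset V) : Fintype.card ↥(s : Set V) = s.card := by
  rw [← Fintype.card_coe s]
  exact Fintype.card_congr (Equiv.subtypeEquivRight (fun x => Finset.mem_coe))

lemma embed_symm (s : Finset V) {M : Matrix ↥(s : Set V) ↥(s : Set V) ℝ} (hM : M.IsSymm) :
    (embedM s M).IsSymm := by
  ext i j
  show embedM s M j i = embedM s M i j
  by_cases h : i ∈ s ∧ j ∈ s
  · rw [embedM, Matrix.of_apply, Matrix.of_apply, dif_pos ⟨h.2, h.1⟩, dif_pos h]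
    exact hM.apply _ _
  · rw [embedM, Matrix.of_apply, Matrix.of_apply, dif_neg h,
      dif_neg (fun h' => h ⟨h'.2, h'.1⟩)]

lemma lower1 (hinter : V1 ∩ V2 = {v}) (hunion : V1 ∪ V2 = Finset.univ)
    (hedges : ∀ a b : V, G.Adj a b → (a ∈ V1 ∧ b ∈ V1) ∨ (a ∈ V2 ∧ b ∈ V2)) :
    maxNullity (G.induce (V1 : Set V)) + maxNullity (G.induce (V2 : Set V))
      ≤ maxNullity G + 1 := by
  classical
  obtain ⟨A1, hA1, e1⟩ := exists_max (G.induce (V1 : Set V))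
  obtain ⟨A2, hA2, e2⟩ := exists_max (G.induce (V2 : Set V))
  set B := embedM V1 A1 + embedM V2 A2 with hB
  have hBsymm : B.IsSymm := by
    show Bᵀ = B
    rw [hB, Matrix.transpose_add, (embed_symm V1 hA1.1).eq, (embed_symm V2 hA2.1).eq]
  have hBSG : B ∈ SG G := by
    refine ⟨hBsymm, fun i j hij => ?_⟩
    by_cases h1 : i ∈ V1 ∧ j ∈ V1
    · have h2 : ¬(i ∈ V2 ∧ j ∈ V2) := by
        rintro ⟨hi2, hj2⟩
        exact hij ((eq_v_of_both hinter h1.1 hi2).trans (eq_v_of_both hinter h1.2 hj2).symm)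
      have hBij : B i j = A1 ⟨i, Finset.mem_coe.mpr h1.1⟩ ⟨j, Finset.mem_coe.mpr h1.2⟩ := by
        show embedM V1 A1 i j + embedM V2 A2 i j = _
        rw [embedM, embedM, Matrix.of_apply, Matrix.of_apply, dif_pos h1, dif_neg h2, add_zero]
      rw [hBij]
      have hne : (⟨i, Finset.mem_coe.mpr h1.1⟩ : ↥(V1 : Set V))
          ≠ ⟨j, Finset.mem_coe.mpr h1.2⟩ := fun h => hij (congrArg Subtype.val h)
      exact (hA1.2 _ _ hne).trans (induce_adj G _ _)
    · by_cases h2 : i ∈ V2 ∧ j ∈ V2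
      · have hBij : B i j = A2 ⟨i, Finset.mem_coe.mpr h2.1⟩ ⟨j, Finset.mem_coe.mpr h2.2⟩ := by
          show embedM V1 A1 i j + embedM V2 A2 i j = _
          rw [embedM, embedM, Matrix.of_apply, Matrix.of_apply, dif_neg h1, dif_pos h2, zero_add]
        rw [hBij]
        have hne : (⟨i, Finset.mem_coe.mpr h2.1⟩ : ↥(V2 : Set V))
            ≠ ⟨j, Finset.mem_coe.mpr h2.2⟩ := fun h => hij (congrArg Subtype.val h)
        exact (hA2.2 _ _ hne).trans (induce_adj G _ _)
      · have hBij : B i j = 0 := by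
          show embedM V1 A1 i j + embedM V2 A2 i j = 0
          rw [embedM, embedM, Matrix.of_apply, Matrix.of_apply, dif_neg h1, dif_neg h2, add_zero]
        rw [hBij]
        refine ⟨fun h => absurd rfl h, fun hAdj => ?_⟩
        rcases hedges i j hAdj with h | h
        · exact absurd h h1
        · exact absurd h h2
  have hrank : B.rank ≤ A1.rank + A2.rank := by
    refine (rank_add_le _ _).trans ?_
    rw [rank_embedM, rank_embedM]
  have hle := le_max G hBSG
  have hc1 : Fintype.card ↥(V1 : Set V) = V1.card := card_setcoe V1
  have hc2 : Fintype.card ↥(V2 : Set V) = V2.card := card_setcoe V2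
  have hr1 : A1.rank ≤ Fintype.card ↥(V1 : Set V) := rank_le_card' A1
  have hr2 : A2.rank ≤ Fintype.card ↥(V2 : Set V) := rank_le_card' A2
  have hcards : V1.card + V2.card = Fintype.card V + 1 := by
    have h := Finset.card_union_add_card_inter V1 V2
    rw [hunion, hinter, Finset.card_univ, Finset.card_singleton] at h
    omega
  omega


lemma lower2 (hinter : V1 ∩ V2 = {v}) (hunion : V1 ∪ V2 = Finset.univ)
    (hedges : ∀ a b : V, G.Adj a b → (a ∈ V1 ∧ b ∈ V1) ∨ (a ∈ V2 ∧ b ∈ V2)) :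
    maxNullity (G.induce ((V1.erase v : Finset V) : Set V))
      + maxNullity (G.induce ((V2.erase v : Finset V) : Set V))
      ≤ maxNullity G + 1 := by
  classical
  obtain ⟨B1, hB1, e1⟩ := exists_max (G.induce ((V1.erase v : Finset V) : Set V))
  obtain ⟨B2, hB2, e2⟩ := exists_max (G.induce ((V2.erase v : Finset V) : Set V))
  set R : Matrix V V ℝ :=
    Matrix.of fun i j => if i = v then (if G.Adj v j then (1:ℝ) else 0) else 0 with hR
  set C : Matrix V V ℝ :=
    Matrix.of fun i j => if j = v then (if G.Adj i v then (1:ℝ) else 0) else 0 with hC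
  have hRT : Rᵀ = C := by
    ext i j
    show R j i = C i j
    rw [hR, hC]
    by_cases hj : j = v <;> by_cases hadj : G.Adj i v <;>
      simp [hj, hadj, G.adj_comm]
  have hCT : Cᵀ = R := by
    rw [← hRT, Matrix.transpose_transpose]
  set B := embedM (V1.erase v) B1 + embedM (V2.erase v) B2 + R + C with hB
  have hBsymm : B.IsSymm := by
    show Bᵀ = B
    rw [hB, Matrix.transpose_add, Matrix.transpose_add, Matrix.transpose_add,
      (embed_symm _ hB1.1).eq, (embed_symm _ hB2.1).eq, hRT, hCT]
    exact add_right_comm _ C R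
  have hvE1 : v ∉ V1.erase v := Finset.notMem_erase v V1
  have hvE2 : v ∉ V2.erase v := Finset.notMem_erase v V2
  have hBSG : B ∈ SG G := by
    refine ⟨hBsymm, fun i j hij => ?_⟩
    by_cases hi : i = v
    · have hBij : B i j = if G.Adj i j then (1:ℝ) else 0 := by
        show embedM (V1.erase v) B1 i j + embedM (V2.erase v) B2 i j + R i j + C i j = _
        rw [embedM, embedM, Matrix.of_apply, Matrix.of_apply,
          dif_neg (show ¬(i ∈ V1.erase v ∧ j ∈ V1.erase v) from
            fun h => (Finset.mem_erase.mp h.1).1 hi),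
          dif_neg (show ¬(i ∈ V2.erase v ∧ j ∈ V2.erase v) from
            fun h => (Finset.mem_erase.mp h.1).1 hi), hR, hC,
          Matrix.of_apply, Matrix.of_apply, if_pos hi,
          if_neg (show ¬(j = v) from fun h => hij (hi.trans h.symm))]
        rw [hi]
        ring
      rw [hBij]
      by_cases hadj : G.Adj i j <;> simp [hadj]
    · by_cases hj : j = v
      · have hBij : B i j = if G.Adj i j then (1:ℝ) else 0 := by
          show embedM (V1.erase v) B1 i j + embedM (V2.erase v) B2 i j + R i j + C i j = _
          rw [embedM, embedM, Matrix.of_apply, Matrix.of_apply,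
            dif_neg (show ¬(i ∈ V1.erase v ∧ j ∈ V1.erase v) from
              fun h => (Finset.mem_erase.mp h.2).1 hj),
            dif_neg (show ¬(i ∈ V2.erase v ∧ j ∈ V2.erase v) from
              fun h => (Finset.mem_erase.mp h.2).1 hj), hR, hC,
            Matrix.of_apply, Matrix.of_apply, if_neg hi, if_pos hj]
          rw [hj]
          ring
        rw [hBij]
        by_cases hadj : G.Adj i j <;> simp [hadj]
      · have hRC : R i j = 0 ∧ C i j = 0 := by
          constructor
          · rw [hR, Matrix.of_apply, if_neg hi]
          · rw [hC, Matrix.of_apply, if_neg hj]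
        by_cases h1 : i ∈ V1.erase v ∧ j ∈ V1.erase v
        · have h2 : ¬(i ∈ V2.erase v ∧ j ∈ V2.erase v) := by
            rintro ⟨hi2, hj2⟩
            exact hi (eq_v_of_both hinter (Finset.mem_erase.mp h1.1).2
              (Finset.mem_erase.mp hi2).2)
          have hBij : B i j
              = B1 ⟨i, Finset.mem_coe.mpr h1.1⟩ ⟨j, Finset.mem_coe.mpr h1.2⟩ := by
            show embedM (V1.erase v) B1 i j + embedM (V2.erase v) B2 i j + R i j + C i j = _
            rw [embedM, embedM, Matrix.of_apply, Matrix.of_apply, dif_pos h1, dif_neg h2,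
              hRC.1, hRC.2]
            ring
          rw [hBij]
          have hne : (⟨i, Finset.mem_coe.mpr h1.1⟩ : ↥((V1.erase v : Finset V) : Set V))
              ≠ ⟨j, Finset.mem_coe.mpr h1.2⟩ := fun h => hij (congrArg Subtype.val h)
          exact (hB1.2 _ _ hne).trans (induce_adj G _ _)
        · by_cases h2 : i ∈ V2.erase v ∧ j ∈ V2.erase v
          · have hBij : B i j
                = B2 ⟨i, Finset.mem_coe.mpr h2.1⟩ ⟨j, Finset.mem_coe.mpr h2.2⟩ := by
              show embedM (V1.erase v) B1 i j + embedM (V2.erase v) B2 i j + R i j + C i j = _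
              rw [embedM, embedM, Matrix.of_apply, Matrix.of_apply, dif_neg h1, dif_pos h2,
                hRC.1, hRC.2]
              ring
            rw [hBij]
            have hne : (⟨i, Finset.mem_coe.mpr h2.1⟩ : ↥((V2.erase v : Finset V) : Set V))
                ≠ ⟨j, Finset.mem_coe.mpr h2.2⟩ := fun h => hij (congrArg Subtype.val h)
            exact (hB2.2 _ _ hne).trans (induce_adj G _ _)
          · have hBij : B i j = 0 := by
              show embedM (V1.erase v) B1 i j + embedM (V2.erase v) B2 i j + R i j + C i j = _
              rw [embedM, embedM, Matrix.of_apply, Matrix.of_apply, dif_neg h1, dif_neg h2,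
                hRC.1, hRC.2]
              ring
            rw [hBij]
            refine ⟨fun h => absurd rfl h, fun hAdj => ?_⟩
            rcases hedges i j hAdj with h | h
            · exact (h1 ⟨Finset.mem_erase.mpr ⟨hi, h.1⟩, Finset.mem_erase.mpr ⟨hj, h.2⟩⟩).elim
            · exact (h2 ⟨Finset.mem_erase.mpr ⟨hi, h.1⟩, Finset.mem_erase.mpr ⟨hj, h.2⟩⟩).elim
  have hrank : B.rank ≤ B1.rank + B2.rank + 2 := by
    have s1 : B.rank ≤ (embedM (V1.erase v) B1 + embedM (V2.erase v) B2 + R).rank + C.rank :=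
      rank_add_le _ _
    have s2 : (embedM (V1.erase v) B1 + embedM (V2.erase v) B2 + R).rank
        ≤ (embedM (V1.erase v) B1 + embedM (V2.erase v) B2).rank + R.rank :=
      rank_add_le _ _
    have s3 : (embedM (V1.erase v) B1 + embedM (V2.erase v) B2).rank
        ≤ B1.rank + B2.rank := by
      refine (rank_add_le _ _).trans ?_
      rw [rank_embedM, rank_embedM]
    have s4 : R.rank ≤ 1 := rank_row_le v _
    have s5 : C.rank ≤ 1 := rank_col_le v _
    omega
  have hle := le_max G hBSG
  have hc1 : Fintype.card ↥((V1.erase v : Finset V) : Set V) = (V1.erase v).card :=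
    card_setcoe _
  have hc2 : Fintype.card ↥((V2.erase v : Finset V) : Set V) = (V2.erase v).card :=
    card_setcoe _
  have hr1 : B1.rank ≤ Fintype.card ↥((V1.erase v : Finset V) : Set V) := rank_le_card' B1
  have hr2 : B2.rank ≤ Fintype.card ↥((V2.erase v : Finset V) : Set V) := rank_le_card' B2
  have he1 : (V1.erase v).card = V1.card - 1 := Finset.card_erase_of_mem (mem_v1 hinter)
  have he2 : (V2.erase v).card = V2.card - 1 :=
    Finset.card_erase_of_mem (mem_v1 (by rw [Finset.inter_comm]; exact hinter))
  have hv1' : 1 ≤ V1.card := Finset.card_pos.mpr ⟨v, mem_v1 hinter⟩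
  have hv2' : 1 ≤ V2.card := Finset.card_pos.mpr
    ⟨v, mem_v1 (by rw [Finset.inter_comm]; exact hinter)⟩
  have hcards : V1.card + V2.card = Fintype.card V + 1 := by
    have h := Finset.card_union_add_card_inter V1 V2
    rw [hunion, hinter, Finset.card_univ, Finset.card_singleton] at h
    omega
  omega

end Lower

end CutVertex

open CutVertex Module in
/-- The cut-vertex formula for maximum nullity: if `G = G1 ⊕_v G2`, then
`M(G) = max {M(G1) + M(G2), M(G1-v) + M(G2-v)} - 1`. -/
theorem maxNullity_cut_vertex {V : Type*} [Fintype V] [DecidableEq V]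
    (G : SimpleGraph V) (v : V) (V1 V2 : Finset V)
    (hinter : V1 ∩ V2 = {v}) (hunion : V1 ∪ V2 = Finset.univ)
    (h1 : 2 ≤ V1.card) (h2 : 2 ≤ V2.card)
    (hedges : ∀ a b : V, G.Adj a b → (a ∈ V1 ∧ b ∈ V1) ∨ (a ∈ V2 ∧ b ∈ V2)) :
    maxNullity G =
      max (maxNullity (G.induce ↑V1) + maxNullity (G.induce ↑V2))
        (maxNullity (G.induce ↑(V1.erase v)) + maxNullity (G.induce ↑(V2.erase v)))
        - 1 := by
  classical
  have hinter' : V2 ∩ V1 = {v} := by rw [Finset.inter_comm]; exact hinter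
  have hunion' : V2 ∪ V1 = Finset.univ := by rw [Finset.union_comm]; exact hunion
  have hedges' : ∀ a b : V, G.Adj a b → (a ∈ V2 ∧ b ∈ V2) ∨ (a ∈ V1 ∧ b ∈ V1) :=
    fun a b h => (hedges a b h).symm
  obtain ⟨A, hA, hAe⟩ := exists_max G
  have hAk : finrank ℝ (LinearMap.ker A.mulVecLin) = maxNullity G := by
    rw [← nullity_eq]; exact hAe
  have hupper : maxNullity G + 1 ≤
      max (maxNullity (G.induce ↑V1) + maxNullity (G.induce ↑V2))
        (maxNullity (G.induce ↑(V1.erase v)) + maxNullity (G.induce ↑(V2.erase v))) := by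
    rcases symm_dichotomy (resM_symm (V1.erase v) hA.1)
        (fun a : ↥((V1.erase v : Finset V) : Set V) => A ↑a v) with ⟨y1, hy1⟩ | ⟨u1, hu1, hb1⟩
    · rcases symm_dichotomy (resM_symm (V2.erase v) hA.1)
          (fun a : ↥((V2.erase v : Finset V) : Set V) => A ↑a v) with ⟨y2, hy2⟩ | ⟨u2, hu2, hb2⟩
      · have hk := key_both hinter hunion hedges hA y1 hy1 y2 hy2
        rw [hAk] at hk
        exact hk.trans (le_max_left _ _)
      · have hk := key_not hinter' hunion' hedges' hA u2 hu2 hb2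
        rw [hAk] at hk
        refine hk.trans ?_
        rw [add_comm]
        exact le_max_right _ _
    · have hk := key_not hinter hunion hedges hA u1 hu1 hb1
      rw [hAk] at hk
      exact hk.trans (le_max_right _ _)
  have hl1 := lower1 hinter hunion hedges
  have hl2 := lower2 hinter hunion hedges
  have hmax : max (maxNullity (G.induce ↑V1) + maxNullity (G.induce ↑V2))
      (maxNullity (G.induce ↑(V1.erase v)) + maxNullity (G.induce ↑(V2.erase v)))
      ≤ maxNullity G + 1 := max_le hl1 hl2
  omega
end

section
/- For a graph G, a subset B ⊆ V(G) is a zero forcing set if and only if B intersects every fort of G. -/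
/-- A fort of a graph: a nonempty vertex set `F` such that no vertex outside
`F` has exactly one neighbor in `F`. -/
def IsFort {V : Type*} (G : SimpleGraph V) (F : Set V) : Prop :=
  F.Nonempty ∧ ∀ v ∉ F, ¬ ∃! w, w ∈ F ∧ G.Adj v w

/-- `B` is a zero forcing set of `G` if and only if `B` intersects every fort
of `G`. -/
theorem isZeroForcingSet_iff_forts {V : Type*} [Fintype V] (G : SimpleGraph V)
    (B : Set V) :
    IsZeroForcingSet G B ↔ ∀ F : Set V, IsFort G F → (B ∩ F).Nonempty := by
  constructor
  · intro hB F hF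
    by_contra hne
    rw [Set.not_nonempty_iff_eq_empty] at hne
    have key : ∀ v, ZFClosed G B v → v ∉ F := by
      intro v hv
      induction hv with
      | @init v h =>
        intro hvF
        have : v ∈ B ∩ F := ⟨h, hvF⟩
        rw [hne] at this
        exact this
      | @force u v hu hadj huniq ihu ihw =>
        intro hvF
        exact hF.2 u ihu ⟨v, ⟨hvF, hadj⟩, fun w ⟨hwF, hwadj⟩ => by
          by_contra hwv
          exact ihw w hwadj hwv hwF⟩
    obtain ⟨x, hx⟩ := hF.1
    exact key x (hB x) hx
  · intro hF
    by_contra hB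
    simp only [IsZeroForcingSet, not_forall] at hB
    obtain ⟨v₀, hv₀⟩ := hB
    set F : Set V := {v | ¬ ZFClosed G B v} with hFdef
    have hfort : IsFort G F := by
      refine ⟨⟨v₀, hv₀⟩, ?_⟩
      intro v hv huniq
      simp only [hFdef, Set.mem_setOf_eq, not_not] at hv
      obtain ⟨w, ⟨hwF, hwadj⟩, huw⟩ := huniq
      exact hwF (ZFClosed.force hv hwadj (fun x hx hxw => by
        by_contra hxF
        exact hxw (huw x ⟨hxF, hx⟩)))
    obtain ⟨b, hbB, hbF⟩ := hF F hfort
    exact hbF (ZFClosed.init hbB)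
end
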